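/- For every odd n ≥ 3, the odd cover number of the complete graph K_n equals (n+1)/2; that is, the minimum number of complete bipartite graphs on the vertex set of K_n such that every edge of K_n lies in an odd number of them is exactly (n+1)/2. -/

import Mathlib

open Finset

/-- `e` is an edge of the complete `r`-partite `r`-graph with parts `P 0, ..., P (r-1)`:
it meets every part in exactly one vertex. -/
def IsEdge {α : Type*} [DecidableEq α] {r : ℕ} (P : Fin r → Finset α) (e : Finset α) : Prop :=
  ∀ i, (e ∩ P i).card = 1

instance {α : Type*} [DecidableEq α] {r : ℕ} (P : Fin r → Finset α) (e : Finset α) :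
    Decidable (IsEdge P e) :=
  inferInstanceAs (Decidable (∀ _, _))

/-- The family `H` of complete `r`-partite `r`-graphs (each given by `r` pairwise disjoint
parts inside `V`) is an odd cover of the complete `r`-graph on `V`: every `r`-subset of `V`
is an edge of an odd number of members. -/
def IsOddCoverOn {α : Type*} [DecidableEq α] (V : Finset α) {r m : ℕ}
    (H : Fin m → Fin r → Finset α) : Prop :=
  (∀ i j, H i j ⊆ V) ∧
  (∀ i, Pairwise (Function.onFun Disjoint (H i))) ∧
  ∀ e ⊆ V, e.card = r → Odd ((Finset.univ.filter fun i => IsEdge (H i) e)).card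

/-- `oddCoverNumber r n` is the odd cover number `b_r(n)` of `K_n^(r)`. -/
noncomputable def oddCoverNumber (r n : ℕ) : ℕ :=
  sInf {m | ∃ H : Fin m → Fin r → Finset (Fin n), IsOddCoverOn Finset.univ H}

/-!
Over `𝔽₂`, let `a i, b i` be the indicator vectors of the two sides of the bicliques of an odd
cover of `K_n`. The cover condition says `∑ i, (a i b iᵀ + b i a iᵀ) = J - I`, and this matrix
acts as `-1` on the hyperplane `W = {y | ∑ y = 0}`: every `y ∈ W` equals
`-∑ i, ((b i ⬝ y) a i + (a i ⬝ y) b i)`. If `2m < n`, the `2m` vectors `a i, b i` thus span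
`W`, which has dimension `n - 1 ≥ 2m`, so they form a basis of it; expanding `b j` in this basis
gives `-(a j ⬝ b j) = 1`, whereas `a j ⬝ b j = 0` since the sides are disjoint. Hence
`2m ≥ n`, i.e. `m ≥ (n + 1) / 2` for odd `n`.

Conversely, take a hub together with `k` pairs `p_l, q_l`. The biclique between all `p`'s and all
`q`'s, together with, for each `j`, the biclique between `{p_j, q_j}` and the hub, the `q_l` with
`l < j` and the `p_l` with `l > j`, is an odd cover of `K_{2k+1}` by `k + 1` bicliques.
-/

section LinearAlgebra

variable {K E κ : Type*} [Field K] [AddCommGroup E] [Module K E] [Fintype κ] [DecidableEq κ]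

theorem apply_eq_ite_of_sum_smul_eq_self {W : Submodule K E} (z : κ → E) (f : κ → E → K)
    (hexp : ∀ y ∈ W, ∑ p, f p y • z p = y) (hcard : Fintype.card κ ≤ Module.finrank K W)
    (p q : κ) : f p (z q) = if p = q then 1 else 0 := by
  have hWS : W ≤ Submodule.span K (Set.range z) := fun y hy =>
    hexp y hy ▸ Submodule.sum_mem _ fun p _ =>
      Submodule.smul_mem _ _ (Submodule.subset_span ⟨p, rfl⟩)
  have hspan_le : Module.finrank K (Submodule.span K (Set.range z)) ≤ Fintype.card κ :=
    finrank_range_le_card z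
  have := FiniteDimensional.span_of_finite K (Set.finite_range z)
  have hWeq : W = Submodule.span K (Set.range z) :=
    Submodule.eq_of_le_of_finrank_le hWS (hspan_le.trans hcard)
  have hli : LinearIndependent K z :=
    linearIndependent_iff_card_eq_finrank_span.mpr
      (le_antisymm (hcard.trans (Submodule.finrank_mono hWS)) hspan_le)
  have hzq : ∑ p, f p (z q) • z p = ∑ p, (if p = q then (1 : K) else 0) • z p := by
    rw [hexp _ (hWeq ▸ Submodule.subset_span ⟨q, rfl⟩)]
    simp
  exact sub_eq_zero.mp <| Fintype.linearIndependent_iff.mp hli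
    (fun p => f p (z q) - if p = q then 1 else 0)
    (by simp only [sub_smul, Finset.sum_sub_distrib, hzq, sub_self]) p

end LinearAlgebra

open Matrix

section BicliqueSum

variable {K V ι : Type*} [Fintype ι]

def bicliqueSum [CommSemiring K] (a b : ι → V → K) : Matrix V V K :=
  ∑ i, (vecMulVec (a i) (b i) + vecMulVec (b i) (a i))

lemma bicliqueSum_apply [CommSemiring K] (a b : ι → V → K) (u v : V) :
    bicliqueSum a b u v = ∑ i, (a i u * b i v + a i v * b i u) := by
  simp [bicliqueSum, Matrix.sum_apply, vecMulVec_apply, mul_comm]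

lemma bicliqueSum_mulVec [CommSemiring K] [Fintype V] (a b : ι → V → K) (y : V → K) :
    bicliqueSum a b *ᵥ y = ∑ i, ((b i ⬝ᵥ y) • a i + (a i ⬝ᵥ y) • b i) := by
  simp [bicliqueSum, Matrix.sum_mulVec, Matrix.add_mulVec, vecMulVec_mulVec]

variable [Field K] [Fintype V] [DecidableEq V]

lemma bicliqueSum_mulVec_eq_neg {a b : ι → V → K} (hab : ∀ i, a i * b i = 0)
    (hcover : ∀ u v, u ≠ v → bicliqueSum a b u v = 1) {y : V → K} (hy : ∑ v, y v = 0) :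
    bicliqueSum a b *ᵥ y = -y := by
  have hentry : ∀ u v, bicliqueSum a b u v * y v = y v - if u = v then y v else 0 := by
    intro u v
    split_ifs with huv
    · subst huv
      have hdiag : ∀ i, a i u * b i u = 0 := fun i => congrFun (hab i) u
      simp [bicliqueSum_apply, hdiag]
    · simp [hcover u v huv]
  ext u
  simp only [mulVec, dotProduct, hentry, Finset.sum_sub_distrib, hy, Finset.sum_ite_eq,
    Finset.mem_univ, if_true, zero_sub, Pi.neg_apply]

theorem card_le_two_mul_card_of_bicliqueSum {a b : ι → V → K} (hab : ∀ i, a i * b i = 0)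
    (hcover : ∀ u v, u ≠ v → bicliqueSum a b u v = 1) (hV : 1 < Fintype.card V) :
    Fintype.card V ≤ 2 * Fintype.card ι := by
  classical
  obtain ⟨j⟩ : Nonempty ι := by
    obtain ⟨u, v, huv⟩ := Fintype.exists_pair_of_one_lt_card hV
    by_contra hι
    simpa [not_nonempty_iff.mp hι, bicliqueSum] using hcover u v huv
  let σ : Module.Dual K (V → K) := ∑ v, LinearMap.proj v
  have hσ : ∀ y, σ y = ∑ v, y v := fun y => by simp [σ]
  have hσ_ne : σ ≠ 0 := by
    obtain ⟨u⟩ : Nonempty V := Fintype.card_pos_iff.mp (by omega)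
    intro h
    simpa [hσ] using LinearMap.congr_fun h (Pi.single u 1)
  have hker := σ.finrank_ker_add_one_of_ne_zero hσ_ne
  rw [Module.finrank_fintype_fun_eq_card] at hker
  let f : ι ⊕ ι → (V → K) → K := Sum.elim (fun i y => -(b i ⬝ᵥ y)) (fun i y => -(a i ⬝ᵥ y))
  have hexp : ∀ y ∈ LinearMap.ker σ, ∑ p, f p y • Sum.elim a b p = y := by
    intro y hy
    rw [LinearMap.mem_ker, hσ] at hy
    have h := bicliqueSum_mulVec_eq_neg hab hcover hy
    rw [bicliqueSum_mulVec] at h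
    simp only [Fintype.sum_sum_type, f, Sum.elim_inl, Sum.elim_inr, neg_smul,
      Finset.sum_neg_distrib, ← neg_add, ← Finset.sum_add_distrib, h, neg_neg]
  by_contra hlt
  have := apply_eq_ite_of_sum_smul_eq_self _ f hexp
    (by rw [Fintype.card_sum]; omega) (Sum.inr j) (Sum.inr j)
  have hdisj : a j ⬝ᵥ b j = 0 := Finset.sum_eq_zero fun u _ => congrFun (hab j) u
  simp [f, hdisj] at this

end BicliqueSum

section Cover

variable {α ι : Type*}

lemma pairwise_disjoint_fin_two_iff (P : Fin 2 → Finset α) :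
    Pairwise (Function.onFun Disjoint P) ↔ Disjoint (P 0) (P 1) := by
  refine ⟨fun h => h (by decide), fun h i j hij => ?_⟩
  fin_cases i <;> fin_cases j
  exacts [absurd rfl hij, h, h.symm, absurd rfl hij]

variable [DecidableEq α]

lemma card_inter_pair_eq_one_iff {u v : α} (huv : u ≠ v) (s : Finset α) :
    ({u, v} ∩ s).card = 1 ↔ (u ∈ s ↔ v ∉ s) := by
  by_cases hu : u ∈ s <;> by_cases hv : v ∈ s <;>
    simp [Finset.insert_inter_of_mem, Finset.insert_inter_of_notMem,
      Finset.singleton_inter_of_mem, Finset.singleton_inter_of_notMem, hu, hv, huv]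

lemma isEdge_pair_iff {u v : α} (huv : u ≠ v) {P : Fin 2 → Finset α}
    (hP : Disjoint (P 0) (P 1)) :
    IsEdge P {u, v} ↔ (u ∈ P 0 ∧ v ∈ P 1) ∨ (u ∈ P 1 ∧ v ∈ P 0) := by
  have h01 := Finset.disjoint_left.mp hP
  have h10 := Finset.disjoint_right.mp hP
  rw [IsEdge, Fin.forall_fin_two, card_inter_pair_eq_one_iff huv,
    card_inter_pair_eq_one_iff huv]
  grind

def sideIndicator (H : ι → Fin 2 → Finset α) (s : Fin 2) (i : ι) (u : α) : ZMod 2 :=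
  if u ∈ H i s then 1 else 0

lemma sideIndicator_mul_eq_zero {H : ι → Fin 2 → Finset α} {i : ι}
    (hH : Disjoint (H i 0) (H i 1)) : sideIndicator H 0 i * sideIndicator H 1 i = 0 := by
  funext u
  have h : u ∈ H i 0 → u ∉ H i 1 := fun hu => Finset.disjoint_left.mp hH hu
  by_cases hu : u ∈ H i 0 <;> simp_all [sideIndicator]

lemma cast_card_filter_isEdge_pair [Fintype ι] {H : ι → Fin 2 → Finset α}
    (hH : ∀ i, Disjoint (H i 0) (H i 1)) {u v : α} (huv : u ≠ v) :
    (#{i | IsEdge (H i) {u, v}} : ZMod 2) =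
      bicliqueSum (sideIndicator H 0) (sideIndicator H 1) u v := by
  rw [card_filter, Nat.cast_sum, bicliqueSum_apply]
  refine Finset.sum_congr rfl fun i _ => ?_
  have h01 := Finset.disjoint_left.mp (hH i)
  simp only [isEdge_pair_iff huv (hH i)]
  by_cases hu0 : u ∈ H i 0 <;> by_cases hu1 : u ∈ H i 1 <;> by_cases hv0 : v ∈ H i 0 <;>
    by_cases hv1 : v ∈ H i 1 <;> simp_all [sideIndicator]

lemma isOddCoverOn_univ_iff [Fintype α] {m : ℕ} (H : Fin m → Fin 2 → Finset α) :
    IsOddCoverOn univ H ↔ (∀ i, Disjoint (H i 0) (H i 1)) ∧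
      ∀ u v, u ≠ v → bicliqueSum (sideIndicator H 0) (sideIndicator H 1) u v = 1 := by
  simp only [IsOddCoverOn, subset_univ, implies_true, true_and, true_implies,
    pairwise_disjoint_fin_two_iff]
  refine and_congr_right fun hH => ⟨fun h u v huv => ?_, fun h e he => ?_⟩
  · rw [← cast_card_filter_isEdge_pair hH huv, ZMod.natCast_eq_one_iff_odd]
    exact h _ (Finset.card_pair huv)
  · obtain ⟨u, v, huv, rfl⟩ := Finset.card_eq_two.mp he
    rw [← ZMod.natCast_eq_one_iff_odd, cast_card_filter_isEdge_pair hH huv, h u v huv]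

lemma exists_isOddCoverOn_of_bicliqueSum {κ : Type*} [Fintype κ] [Fintype α] {m n : ℕ}
    (hκ : Fintype.card κ = m) (hα : Fintype.card α = n)
    {A : κ → Fin 2 → Finset α} (hA : ∀ i, Disjoint (A i 0) (A i 1))
    (hcover : ∀ u v, u ≠ v → bicliqueSum (sideIndicator A 0) (sideIndicator A 1) u v = 1) :
    ∃ H : Fin m → Fin 2 → Finset (Fin n), IsOddCoverOn univ H := by
  let eI := (Fintype.equivFinOfCardEq hκ).symm
  let eV := Fintype.equivFinOfCardEq hα
  refine ⟨fun i s => (A (eI i) s).map eV.toEmbedding, (isOddCoverOn_univ_iff _).mpr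
    ⟨fun i => by simpa using hA (eI i), fun u v huv => ?_⟩⟩
  have hside : ∀ s i u, sideIndicator (fun i s => (A (eI i) s).map eV.toEmbedding) s i u =
      sideIndicator A s (eI i) (eV.symm u) := by
    simp [sideIndicator, Finset.mem_map_equiv]
  simp only [bicliqueSum_apply, hside]
  rw [eI.sum_comp (fun i => sideIndicator A 0 i (eV.symm u) * sideIndicator A 1 i (eV.symm v) +
    sideIndicator A 0 i (eV.symm v) * sideIndicator A 1 i (eV.symm u)), ← bicliqueSum_apply]
  exact hcover _ _ (eV.symm.injective.ne huv)

end Cover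

section Staircase

variable {ι : Type*} [LinearOrder ι] [Fintype ι]

-- The hub is `none`; `p_l` and `q_l` are `some (l, false)` and `some (l, true)`.
def staircase : Option ι → Fin 2 → Finset (Option (ι × Bool))
  | none => ![univ.image fun l => some (l, false), univ.image fun l => some (l, true)]
  | some j => ![univ.image fun b => some (j, b),
      insert none ((univ.filter fun x : ι × Bool => if x.2 then x.1 < j else j < x.1).image some)]

lemma bicliqueSum_staircase {u v : Option (ι × Bool)} (huv : u ≠ v) :
    bicliqueSum (sideIndicator staircase 0) (sideIndicator staircase 1) u v = (1 : ZMod 2) := by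
  rw [bicliqueSum_apply, Fintype.sum_option]
  rcases u with _ | ⟨l, b⟩ <;> rcases v with _ | ⟨l', b'⟩
  · contradiction
  · simp [sideIndicator, staircase, ← and_or_left]
  · simp [sideIndicator, staircase, ← and_or_left]
  · simp [sideIndicator, staircase, ← and_or_left, -mul_ite, ite_mul, Finset.sum_add_distrib]
    cases b <;> cases b' <;> rcases lt_trichotomy l l' with h | rfl | h <;>
      simp_all [lt_asymm] <;> decide

lemma disjoint_staircase (i : Option ι) : Disjoint (staircase i 0) (staircase i 1) := by
  cases i <;> simp +contextual [staircase, Finset.disjoint_left, ne_of_lt, ne_of_gt]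

end Staircase

theorem stmt3 (n : ℕ) (hn : 3 ≤ n) (ho : Odd n) :
    oddCoverNumber 2 n = (n + 1) / 2 := by
  obtain ⟨k, rfl⟩ := ho
  have hupper : ∃ H : Fin (k + 1) → Fin 2 → Finset (Fin (2 * k + 1)), IsOddCoverOn univ H :=
    exists_isOddCoverOn_of_bicliqueSum (by simp) (by simp [mul_comm])
      (disjoint_staircase (ι := Fin k)) fun _ _ => bicliqueSum_staircase
  have hlower : ∀ m, (∃ H : Fin m → Fin 2 → Finset (Fin (2 * k + 1)), IsOddCoverOn univ H) →
      k + 1 ≤ m := by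
    rintro m ⟨H, hH⟩
    obtain ⟨hdisj, hcover⟩ := (isOddCoverOn_univ_iff H).mp hH
    have := card_le_two_mul_card_of_bicliqueSum (fun i => sideIndicator_mul_eq_zero (hdisj i))
      hcover (by rw [Fintype.card_fin]; omega)
    simp only [Fintype.card_fin] at this
    omega
  rw [show (2 * k + 1 + 1) / 2 = k + 1 by omega]
  exact le_antisymm (Nat.sInf_le hupper) (le_csInf ⟨_, hupper⟩ hlower)
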